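/- Define 𝒢(τ; a_L, a_R) = −(√2 a_L/√(πτ)) e^{−a_R²τ/2} − a_L(2a_L+a_R) e^{2a_L(a_L+a_R)τ} erfc(−(2a_L+a_R)√τ/√2). If a_L < 0 and a_R ≥ 0 then ∫₀^∞ 𝒢(τ; a_L, a_R) dτ = 1, and if a_L < 0 and a_R ≤ 0 (with a_L + a_R < 0) then ∫₀^∞ 𝒢(τ; a_L, a_R) dτ = a_L/(a_L + a_R). -/

import Mathlib

open Real MeasureTheory

open Filter Set Topology

/-- The complementary error function. -/
noncomputable def erfc (x : ℝ) : ℝ :=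
  (2 / Real.sqrt π) * ∫ u in Set.Ioi x, Real.exp (-u^2)

/-- The long-time limiting occupation-time density `𝒢`. -/
noncomputable def Gcal (τ aL aR : ℝ) : ℝ :=
  -(Real.sqrt 2 * aL / Real.sqrt (π * τ)) * Real.exp (-aR^2 * τ / 2) -
    aL * (2*aL + aR) * Real.exp (2 * aL * (aL + aR) * τ) *
      erfc (-(2*aL + aR) * Real.sqrt τ / Real.sqrt 2)

lemma integrable_gauss : Integrable (fun u : ℝ => Real.exp (-u^2)) := by
  simpa using integrable_exp_neg_mul_sq (b := 1) one_pos

lemma gauss_total : ∫ u : ℝ, Real.exp (-u^2) = Real.sqrt π := by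
  simpa using integral_gaussian 1

lemma I_eq (x : ℝ) : ∫ u in Set.Ioi x, Real.exp (-u^2)
    = (∫ u in Set.Ioi (0:ℝ), Real.exp (-u^2)) - ∫ u in (0:ℝ)..x, Real.exp (-u^2) := by
  have h0 := intervalIntegral.integral_Iic_add_Ioi (b := (0:ℝ)) (μ := volume)
    integrable_gauss.integrableOn (f := fun u : ℝ => Real.exp (-u^2)) integrable_gauss.integrableOn
  have hx := intervalIntegral.integral_Iic_add_Ioi (b := x) (μ := volume)
    integrable_gauss.integrableOn (f := fun u : ℝ => Real.exp (-u^2)) integrable_gauss.integrableOn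
  have hi := intervalIntegral.integral_Iic_sub_Iic (a := (0:ℝ)) (b := x) (μ := volume)
    (f := fun u : ℝ => Real.exp (-u^2)) integrable_gauss.integrableOn integrable_gauss.integrableOn
  linarith

lemma hasDerivAt_erfc (x : ℝ) :
    HasDerivAt erfc (-(2 / Real.sqrt π) * Real.exp (-x^2)) x := by
  have h : HasDerivAt (fun y : ℝ => ∫ u in (0:ℝ)..y, Real.exp (-u^2)) (Real.exp (-x^2)) x :=
    intervalIntegral.integral_hasDerivAt_right integrable_gauss.intervalIntegrable
      integrable_gauss.aestronglyMeasurable.stronglyMeasurableAtFilter (by fun_prop)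
  have h2 : HasDerivAt (fun y : ℝ => ∫ u in Set.Ioi y, Real.exp (-u^2)) (-Real.exp (-x^2)) x := by
    refine HasDerivAt.congr_of_eventuallyEq (h.const_sub (∫ u in Set.Ioi (0:ℝ), Real.exp (-u^2))) ?_
    exact Filter.Eventually.of_forall fun y => I_eq y
  have := h2.const_mul (2 / Real.sqrt π)
  unfold erfc
  convert this using 1
  · rfl
  · rfl
  ring

lemma continuous_erfc : Continuous erfc :=
  continuous_iff_continuousAt.2 fun x => (hasDerivAt_erfc x).continuousAt

lemma erfc_nonneg (x : ℝ) : 0 ≤ erfc x := by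
  unfold erfc
  apply mul_nonneg (by positivity)
  exact setIntegral_nonneg measurableSet_Ioi fun u _ => (Real.exp_pos _).le

lemma erfc_le_two (x : ℝ) : erfc x ≤ 2 := by
  unfold erfc
  have h : (∫ u in Set.Ioi x, Real.exp (-u^2)) ≤ Real.sqrt π := by
    rw [← gauss_total]
    exact setIntegral_le_integral integrable_gauss
      (Filter.Eventually.of_forall fun u => (Real.exp_pos _).le)
  have hπ : 0 < Real.sqrt π := Real.sqrt_pos.2 Real.pi_pos
  calc (2 / Real.sqrt π) * ∫ u in Set.Ioi x, Real.exp (-u^2)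
      ≤ (2 / Real.sqrt π) * Real.sqrt π := by
        apply mul_le_mul_of_nonneg_left h (by positivity)
    _ = 2 := by field_simp

lemma erfc_zero : erfc 0 = 1 := by
  unfold erfc
  have : ∫ u in Set.Ioi (0:ℝ), Real.exp (-u^2) = Real.sqrt π / 2 := by
    have heven : ∀ u : ℝ, Real.exp (-(-u)^2) = Real.exp (-u^2) := by intro u; ring_nf
    have hsymm : ∫ u in Set.Ioi (0:ℝ), Real.exp (-u^2) = ∫ u in Set.Iic (0:ℝ), Real.exp (-u^2) := by
      rw [← neg_zero, ← integral_comp_neg_Iic]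
      simp_rw [heven, neg_zero]
    have h0 := intervalIntegral.integral_Iic_add_Ioi (b := (0:ℝ)) (μ := volume)
      integrable_gauss.integrableOn (f := fun u : ℝ => Real.exp (-u^2)) integrable_gauss.integrableOn
    rw [gauss_total] at h0
    linarith
  rw [this]
  have hπ : 0 < Real.sqrt π := Real.sqrt_pos.2 Real.pi_pos
  field_simp

-- key bound: for x > 0, erfc x ≤ exp (-x^2) / (x * sqrt π)
lemma I_le (x : ℝ) (hx : 0 < x) :
    (∫ u in Set.Ioi x, Real.exp (-u^2)) ≤ Real.exp (-x^2) / (2 * x) := by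
  have hmul : Integrable (fun u : ℝ => u * Real.exp (-u^2)) := by
    simpa using integrable_mul_exp_neg_mul_sq (b := 1) one_pos
  have hmono : (∫ u in Set.Ioi x, Real.exp (-u^2))
      ≤ ∫ u in Set.Ioi x, (1/x) * (u * Real.exp (-u^2)) := by
    apply setIntegral_mono_on integrable_gauss.integrableOn
    · exact hmul.integrableOn.const_mul _
    · exact measurableSet_Ioi
    · intro u hu
      have hu' : x ≤ u := le_of_lt hu
      have h1 : 1 ≤ u / x := (one_le_div hx).2 hu'
      have := Real.exp_pos (-u^2)
      rw [show (1/x) * (u * Real.exp (-u^2)) = (u/x) * Real.exp (-u^2) by ring]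
      nlinarith
  have hval : ∫ u in Set.Ioi x, u * Real.exp (-u^2) = Real.exp (-x^2) / 2 := by
    have hderiv : ∀ u ∈ Set.Ioi x, HasDerivAt (fun v : ℝ => -Real.exp (-v^2) / 2)
        (u * Real.exp (-u^2)) u := by
      intro u _
      have h1 : HasDerivAt (fun v : ℝ => -v^2) (-(2*u)) u := by
        simpa [Pi.neg_def] using ((hasDerivAt_pow 2 u).neg)
      have := ((h1.exp).neg.div_const 2)
      convert this using 1
      · rfl
      · rfl
      · rfl
      simp [Real.exp_ne_zero]
      ring
    have htend : Tendsto (fun v : ℝ => -Real.exp (-v^2) / 2) atTop (𝓝 0) := by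
      have : Tendsto (fun v : ℝ => -v^2) atTop atBot := by
        apply tendsto_neg_atBot_iff.2
        exact tendsto_pow_atTop (by norm_num)
      simpa using ((Real.tendsto_exp_atBot.comp this).neg.div_const 2)
    have := integral_Ioi_of_hasDerivAt_of_tendsto
      (f := fun v : ℝ => -Real.exp (-v^2) / 2) (f' := fun u => u * Real.exp (-u^2))
      (a := x) (m := 0)
      (((Real.continuous_exp.comp (continuous_pow 2).neg).neg.div_const 2).continuousWithinAt)
      hderiv hmul.integrableOn htend
    rw [this]; ring
  calc (∫ u in Set.Ioi x, Real.exp (-u^2))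
      ≤ ∫ u in Set.Ioi x, (1/x) * (u * Real.exp (-u^2)) := hmono
    _ = (1/x) * ∫ u in Set.Ioi x, u * Real.exp (-u^2) := integral_const_mul _ _
    _ = Real.exp (-x^2) / (2 * x) := by rw [hval]; ring

lemma erfc_le_bound {x : ℝ} (hx : 0 < x) : erfc x ≤ Real.exp (-x^2) / (x * Real.sqrt π) := by
  unfold erfc
  have h := I_le x hx
  have hπ : 0 < Real.sqrt π := Real.sqrt_pos.2 Real.pi_pos
  calc (2 / Real.sqrt π) * ∫ u in Set.Ioi x, Real.exp (-u^2)
      ≤ (2 / Real.sqrt π) * (Real.exp (-x^2) / (2*x)) :=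
        mul_le_mul_of_nonneg_left h (by positivity)
    _ = Real.exp (-x^2) / (x * Real.sqrt π) := by field_simp

lemma sqrt_tendsto_atTop : Tendsto Real.sqrt atTop atTop := by
  refine tendsto_atTop_atTop.2 fun b => ⟨b^2, fun a ha => ?_⟩
  calc b ≤ |b| := le_abs_self b
    _ = Real.sqrt (b^2) := (Real.sqrt_sq_eq_abs b).symm
    _ ≤ Real.sqrt a := Real.sqrt_le_sqrt ha

lemma erfc_tendsto_atTop : Tendsto erfc atTop (𝓝 0) := by
  apply squeeze_zero' (Filter.Eventually.of_forall fun x => erfc_nonneg x)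
  · filter_upwards [eventually_gt_atTop (0:ℝ)] with x hx
    calc erfc x ≤ Real.exp (-x^2) / (x * Real.sqrt π) := erfc_le_bound hx
      _ ≤ 1 / (x * Real.sqrt π) := by
          have hden : 0 < x * Real.sqrt π := by positivity
          gcongr
          exact Real.exp_le_one_iff.2 (neg_nonpos.2 (sq_nonneg x))
      _ = (1 / Real.sqrt π) * x⁻¹ := by ring
  · simpa using (tendsto_inv_atTop_zero (𝕜 := ℝ)).const_mul (1 / Real.sqrt π)

lemma erfc_add_neg (x : ℝ) : erfc x + erfc (-x) = 2 := by
  unfold erfc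
  have hsymm : ∫ u in Set.Ioi (-x), Real.exp (-u^2) = ∫ u in Set.Iic x, Real.exp (-u^2) := by
    rw [← integral_comp_neg_Iic]
    congr 1; ext u; ring_nf
  have h0 := intervalIntegral.integral_Iic_add_Ioi (b := x) (μ := volume)
    (f := fun u : ℝ => Real.exp (-u^2)) integrable_gauss.integrableOn integrable_gauss.integrableOn
  rw [gauss_total] at h0
  have hπ : 0 < Real.sqrt π := Real.sqrt_pos.2 Real.pi_pos
  rw [hsymm]
  field_simp
  linarith

lemma erfc_tendsto_atBot : Tendsto erfc atBot (𝓝 2) := by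
  have h : Tendsto (fun x : ℝ => 2 - erfc (-x)) atBot (𝓝 2) := by
    have : Tendsto (fun x : ℝ => erfc (-x)) atBot (𝓝 0) :=
      erfc_tendsto_atTop.comp tendsto_neg_atBot_atTop
    simpa using (tendsto_const_nhds (x := (2:ℝ)) (f := atBot)).sub this
  refine h.congr fun x => ?_
  have := erfc_add_neg x
  linarith

lemma hasDerivAt_erfc_sqrt (b : ℝ) {τ : ℝ} (hτ : 0 < τ) :
    HasDerivAt (fun t => erfc (-b * Real.sqrt t / Real.sqrt 2))
      (Real.sqrt 2 * b * Real.exp (-b^2*τ/2) / (2 * Real.sqrt π * Real.sqrt τ)) τ := by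
  have hsq : HasDerivAt Real.sqrt (1/(2*Real.sqrt τ)) τ := Real.hasDerivAt_sqrt hτ.ne'
  have hin : HasDerivAt (fun t => -b * Real.sqrt t / Real.sqrt 2)
      (-b * (1/(2*Real.sqrt τ)) / Real.sqrt 2) τ := (hsq.const_mul (-b)).div_const _
  have h := (hasDerivAt_erfc (-b*Real.sqrt τ/Real.sqrt 2)).comp τ hin
  have hs2 : Real.sqrt 2 * Real.sqrt 2 = 2 := Real.mul_self_sqrt (by norm_num)
  have ht : Real.sqrt τ * Real.sqrt τ = τ := Real.mul_self_sqrt hτ.le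
  have hsτ : (0:ℝ) < Real.sqrt τ := Real.sqrt_pos.2 hτ
  have hs2' : (0:ℝ) < Real.sqrt 2 := by norm_num [Real.sqrt_pos]
  have hsπ : (0:ℝ) < Real.sqrt π := Real.sqrt_pos.2 Real.pi_pos
  have harg : (-b*Real.sqrt τ/Real.sqrt 2)^2 = b^2*τ/2 := by
    rw [div_pow, mul_pow, neg_pow, sq (Real.sqrt τ), ht, sq (Real.sqrt 2), hs2]
    ring
  rw [harg] at h
  convert h using 1
  · rfl
  · rfl
  · rfl
  field_simp
  ring_nf
  linear_combination b * hs2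


noncomputable def Fa (aL aR τ : ℝ) : ℝ :=
  -((2*aL+aR)/(2*(aL+aR))) *
      (Real.exp (2*aL*(aL+aR)*τ) * erfc (-(2*aL+aR) * Real.sqrt τ / Real.sqrt 2))
    - (aR/(2*(aL+aR))) * erfc (-(-aR) * Real.sqrt τ / Real.sqrt 2)

lemma exp_key (aL aR τ : ℝ) :
    Real.exp (2*aL*(aL+aR)*τ) * Real.exp (-(2*aL+aR)^2*τ/2) = Real.exp (-aR^2*τ/2) := by
  rw [← Real.exp_add]; congr 1; ring

lemma hasDerivAt_Fa (aL aR : ℝ) (hc : aL + aR ≠ 0) {τ : ℝ} (hτ : 0 < τ) :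
    HasDerivAt (Fa aL aR) (Gcal τ aL aR) τ := by
  set b := 2*aL+aR with hb
  set k := 2*aL*(aL+aR) with hk
  have h1 : HasDerivAt (fun t : ℝ => Real.exp (k*t)) (Real.exp (k*τ) * k) τ := by
    simpa using ((hasDerivAt_id τ).const_mul k).exp
  have h2 := hasDerivAt_erfc_sqrt b hτ
  have h3 := hasDerivAt_erfc_sqrt (-aR) hτ
  have hprod := h1.mul h2
  have hF := ((hprod.const_mul (-(b/(2*(aL+aR))))).sub (h3.const_mul (aR/(2*(aL+aR)))))
  convert hF using 1
  · rfl
  · rfl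
  · rfl
  have hsτ : (0:ℝ) < Real.sqrt τ := Real.sqrt_pos.2 hτ
  have hsπ : (0:ℝ) < Real.sqrt π := Real.sqrt_pos.2 Real.pi_pos
  have key : Real.exp (k*τ) * (Real.sqrt 2 * b * Real.exp (-b^2*τ/2) / (2 * Real.sqrt π * Real.sqrt τ))
      = Real.sqrt 2 * b * Real.exp (-aR^2*τ/2) / (2 * Real.sqrt π * Real.sqrt τ) := by
    rw [show Real.exp (k*τ) * (Real.sqrt 2 * b * Real.exp (-b^2*τ/2) / (2 * Real.sqrt π * Real.sqrt τ))
        = Real.sqrt 2 * b * (Real.exp (k*τ) * Real.exp (-b^2*τ/2)) / (2 * Real.sqrt π * Real.sqrt τ) from by ring]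
    rw [hb, hk, exp_key]
  rw [mul_add] at hF ⊢
  unfold Gcal
  rw [Real.sqrt_mul Real.pi_pos.le]
  rw [key]
  have hn : (-aR:ℝ)^2 = aR^2 := by ring
  rw [hn]
  field_simp
  rw [hb, hk]
  ring_nf

lemma arg_sq (b : ℝ) {τ : ℝ} (hτ : 0 ≤ τ) : (-b * Real.sqrt τ / Real.sqrt 2)^2 = b^2*τ/2 := by
  have hs2 : Real.sqrt 2 * Real.sqrt 2 = 2 := Real.mul_self_sqrt (by norm_num)
  have ht : Real.sqrt τ * Real.sqrt τ = τ := Real.mul_self_sqrt hτ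
  rw [div_pow, mul_pow, neg_pow, sq (Real.sqrt τ), ht, sq (Real.sqrt 2), hs2]
  ring

lemma Gcal_nonneg {aL aR : ℝ} (hL : aL < 0) {τ : ℝ} (hτ : 0 < τ) : 0 ≤ Gcal τ aL aR := by
  have hsτ : (0:ℝ) < Real.sqrt τ := Real.sqrt_pos.2 hτ
  have hsπ : (0:ℝ) < Real.sqrt π := Real.sqrt_pos.2 Real.pi_pos
  have hs2' : (0:ℝ) < Real.sqrt 2 := Real.sqrt_pos.2 (by norm_num)
  have hs2 : Real.sqrt 2 * Real.sqrt 2 = 2 := Real.mul_self_sqrt (by norm_num)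
  have hsπτ : Real.sqrt (π * τ) = Real.sqrt π * Real.sqrt τ := Real.sqrt_mul Real.pi_pos.le τ
  set b := 2*aL+aR with hb
  have ht1 : 0 ≤ -(Real.sqrt 2 * aL / Real.sqrt (π * τ)) * Real.exp (-aR^2 * τ / 2) := by
    rw [hsπτ, show -(Real.sqrt 2 * aL / (Real.sqrt π * Real.sqrt τ))
      = (-(Real.sqrt 2 * aL))/(Real.sqrt π * Real.sqrt τ) from by ring]
    have h0 : 0 ≤ -(Real.sqrt 2 * aL) := by nlinarith
    exact mul_nonneg (div_nonneg h0 (by positivity)) (Real.exp_pos _).le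
  unfold Gcal
  rcases le_or_gt 0 b with hbpos | hbneg
  · have : 0 ≤ (-aL) * b * Real.exp (2*aL*(aL+aR)*τ) * erfc (-b * Real.sqrt τ / Real.sqrt 2) := by
      have h1 := erfc_nonneg (-b * Real.sqrt τ / Real.sqrt 2)
      have h2 : (0:ℝ) ≤ -aL := by linarith
      exact mul_nonneg (mul_nonneg (mul_nonneg h2 hbpos) (Real.exp_pos _).le) h1
    rw [← hb]
    nlinarith
  · have hx : 0 < -b * Real.sqrt τ / Real.sqrt 2 := by
      apply div_pos (mul_pos (by linarith) hsτ) hs2'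
    have hR := erfc_le_bound hx
    rw [arg_sq b hτ.le] at hR
    set E := Real.exp (2*aL*(aL+aR)*τ) with hE
    set R := erfc (-b * Real.sqrt τ / Real.sqrt 2) with hRdef
    have hEpos : 0 < E := Real.exp_pos _
    have hABE : 0 < aL * b * E := mul_pos (mul_pos_of_neg_of_neg hL hbneg) hEpos
    have hkey : aL * b * E * (Real.exp (-(b^2*τ/2)) / ((-b * Real.sqrt τ / Real.sqrt 2) * Real.sqrt π))
        = -(Real.sqrt 2 * aL / Real.sqrt (π * τ)) * Real.exp (-aR^2 * τ / 2) := by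
      have he : E * Real.exp (-(b^2*τ/2)) = Real.exp (-aR^2 * τ / 2) := by
        rw [hE, hb]
        rw [show -( (2*aL+aR)^2*τ/2) = -(2*aL+aR)^2*τ/2 from by ring,
          show -aR^2*τ/2 = -aR^2*τ/2 from rfl]
        exact exp_key aL aR τ
      rw [hsπτ, ← he]
      have hbne : b ≠ 0 := ne_of_lt hbneg
      field_simp
    have hle : aL * b * E * R
        ≤ aL * b * E * (Real.exp (-(b^2*τ/2)) / ((-b * Real.sqrt τ / Real.sqrt 2) * Real.sqrt π)) :=
      mul_le_mul_of_nonneg_left hR hABE.le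
    rw [hkey] at hle
    rw [← hb]
    nlinarith

lemma tendsto_exp_erfc_of_neg {k : ℝ} (hk : k < 0) (b : ℝ) :
    Tendsto (fun τ => Real.exp (k*τ) * erfc (-b * Real.sqrt τ / Real.sqrt 2)) atTop (𝓝 0) := by
  apply squeeze_zero' (g := fun τ => Real.exp (k*τ) * 2)
  · exact Filter.Eventually.of_forall fun τ =>
      mul_nonneg (Real.exp_pos _).le (erfc_nonneg _)
  · exact Filter.Eventually.of_forall fun τ =>
      mul_le_mul_of_nonneg_left (erfc_le_two _) (Real.exp_pos _).le
  · have h1 : Tendsto (fun τ : ℝ => k*τ) atTop atBot :=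
      (tendsto_const_mul_atBot_of_neg hk).2 tendsto_id
    have h2 : Tendsto (fun τ : ℝ => Real.exp (k*τ)) atTop (𝓝 0) :=
      Real.tendsto_exp_atBot.comp h1
    simpa using h2.mul_const 2

lemma tendsto_exp_erfc_of_decay {b : ℝ} (hb : b < 0) {k : ℝ} (hk : k ≤ b^2/2) :
    Tendsto (fun τ => Real.exp (k*τ) * erfc (-b * Real.sqrt τ / Real.sqrt 2)) atTop (𝓝 0) := by
  have hsπ : (0:ℝ) < Real.sqrt π := Real.sqrt_pos.2 Real.pi_pos
  have hs2' : (0:ℝ) < Real.sqrt 2 := Real.sqrt_pos.2 (by norm_num)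
  apply squeeze_zero'
    (g := fun τ => (Real.sqrt 2 / ((-b) * Real.sqrt π)) * (Real.sqrt τ)⁻¹)
  · exact Filter.Eventually.of_forall fun τ =>
      mul_nonneg (Real.exp_pos _).le (erfc_nonneg _)
  · filter_upwards [eventually_gt_atTop (0:ℝ)] with τ hτ
    have hsτ : (0:ℝ) < Real.sqrt τ := Real.sqrt_pos.2 hτ
    have hx : 0 < -b * Real.sqrt τ / Real.sqrt 2 :=
      div_pos (mul_pos (by linarith) hsτ) hs2'
    have hR := erfc_le_bound hx
    rw [arg_sq b hτ.le] at hR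
    calc Real.exp (k*τ) * erfc (-b * Real.sqrt τ / Real.sqrt 2)
        ≤ Real.exp (k*τ) * (Real.exp (-(b^2*τ/2)) / ((-b * Real.sqrt τ / Real.sqrt 2) * Real.sqrt π)) :=
          mul_le_mul_of_nonneg_left hR (Real.exp_pos _).le
      _ = Real.exp ((k - b^2/2)*τ) * ((Real.sqrt 2 / ((-b) * Real.sqrt π)) * (Real.sqrt τ)⁻¹) := by
          rw [show (k - b^2/2)*τ = k*τ + (-(b^2*τ/2)) from by ring, Real.exp_add]
          have hbne : (-b) ≠ 0 := ne_of_gt (neg_pos.2 hb)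
          field_simp
      _ ≤ 1 * ((Real.sqrt 2 / ((-b) * Real.sqrt π)) * (Real.sqrt τ)⁻¹) := by
          have hbp : (0:ℝ) < -b := neg_pos.2 hb
          apply mul_le_mul_of_nonneg_right _ (by positivity)
          apply Real.exp_le_one_iff.2
          nlinarith
    rw [one_mul]
  · rw [show (0:ℝ) = (Real.sqrt 2 / ((-b) * Real.sqrt π)) * 0 from by ring]
    exact (tendsto_inv_atTop_zero.comp sqrt_tendsto_atTop).const_mul _

lemma continuous_Fa (aL aR : ℝ) : Continuous (Fa aL aR) := by
  unfold Fa
  have h1 : Continuous fun τ : ℝ => -(2*aL+aR) * Real.sqrt τ / Real.sqrt 2 :=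
    (continuous_const.mul Real.continuous_sqrt).div_const _
  have h2 : Continuous fun τ : ℝ => -(-aR) * Real.sqrt τ / Real.sqrt 2 :=
    (continuous_const.mul Real.continuous_sqrt).div_const _
  have h3 : Continuous fun τ : ℝ => Real.exp (2*aL*(aL+aR)*τ) :=
    Real.continuous_exp.comp (continuous_const.mul continuous_id)
  exact ((continuous_const.mul (h3.mul (continuous_erfc.comp h1))).sub
    (continuous_const.mul (continuous_erfc.comp h2)))

lemma Fa_zero (aL aR : ℝ) (hc : aL + aR ≠ 0) : Fa aL aR 0 = -1 := by
  unfold Fa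
  simp only [Real.sqrt_zero, mul_zero, zero_div, erfc_zero, mul_one, Real.exp_zero, one_mul]
  field_simp
  ring

lemma master (aL aR m : ℝ) (hL : aL < 0) (hc : aL + aR ≠ 0)
    (hm : Tendsto (Fa aL aR) atTop (𝓝 m)) :
    ∫ τ in Set.Ioi (0:ℝ), Gcal τ aL aR = m + 1 := by
  rw [integral_Ioi_of_hasDerivAt_of_nonneg
    ((continuous_Fa aL aR).continuousWithinAt)
    (fun τ hτ => hasDerivAt_Fa aL aR hc hτ)
    (fun τ hτ => Gcal_nonneg hL hτ) hm, Fa_zero aL aR hc]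
  ring

lemma tendsto_inner_atTop {b : ℝ} (hb : b < 0) :
    Tendsto (fun τ : ℝ => -b * Real.sqrt τ / Real.sqrt 2) atTop atTop := by
  have h1 : Tendsto (fun τ : ℝ => -b * Real.sqrt τ) atTop atTop :=
    (tendsto_const_mul_atTop_of_pos (neg_pos.2 hb)).2 sqrt_tendsto_atTop
  exact (tendsto_div_const_atTop_of_pos (Real.sqrt_pos.2 (by norm_num))).2 h1

lemma tendsto_inner_atBot {b : ℝ} (hb : 0 < b) :
    Tendsto (fun τ : ℝ => -b * Real.sqrt τ / Real.sqrt 2) atTop atBot := by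
  have h1 : Tendsto (fun τ : ℝ => -b * Real.sqrt τ) atTop atBot :=
    (tendsto_const_mul_atBot_of_neg (neg_neg_iff_pos.2 hb)).2 sqrt_tendsto_atTop
  exact (tendsto_div_const_atBot_of_pos (Real.sqrt_pos.2 (by norm_num))).2 h1

lemma hterm1_lim {aL aR : ℝ} (hL : aL < 0) (hc : aL + aR ≠ 0) :
    Tendsto (fun τ => Real.exp (2*aL*(aL+aR)*τ) *
      erfc (-(2*aL+aR) * Real.sqrt τ / Real.sqrt 2)) atTop (𝓝 0) := by
  rcases lt_or_gt_of_ne hc with hneg | hpos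
  · exact tendsto_exp_erfc_of_decay (by linarith) (by nlinarith [sq_nonneg aR])
  · exact tendsto_exp_erfc_of_neg (by nlinarith) _

lemma int_eq_of_cne {aL aR : ℝ} (hL : aL < 0) (hc : aL + aR ≠ 0) (L2 : ℝ)
    (hterm2 : Tendsto (fun τ => erfc (-(-aR) * Real.sqrt τ / Real.sqrt 2)) atTop (𝓝 L2)) :
    ∫ τ in Set.Ioi (0:ℝ), Gcal τ aL aR = -(aR/(2*(aL+aR))) * L2 + 1 := by
  have hm : Tendsto (Fa aL aR) atTop
      (𝓝 (-((2*aL+aR)/(2*(aL+aR))) * 0 - (aR/(2*(aL+aR))) * L2)) :=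
    (((hterm1_lim hL hc).const_mul _).sub (hterm2.const_mul _))
  rw [master aL aR _ hL hc hm]
  ring

lemma case_one_cne {aL aR : ℝ} (hL : aL < 0) (haR : 0 ≤ aR) (hc : aL + aR ≠ 0) :
    ∫ τ in Set.Ioi (0:ℝ), Gcal τ aL aR = 1 := by
  rcases eq_or_lt_of_le haR with h0 | hpos
  · subst h0
    have hterm2 : Tendsto (fun τ : ℝ => erfc (-(-(0:ℝ)) * Real.sqrt τ / Real.sqrt 2))
        atTop (𝓝 1) := by
      have : (fun τ : ℝ => erfc (-(-(0:ℝ)) * Real.sqrt τ / Real.sqrt 2)) = fun _ => 1 := by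
        funext τ; norm_num [erfc_zero]
      rw [this]; exact tendsto_const_nhds
    rw [int_eq_of_cne hL hc 1 hterm2]; norm_num
  · have hterm2 : Tendsto (fun τ : ℝ => erfc (-(-aR) * Real.sqrt τ / Real.sqrt 2))
        atTop (𝓝 0) := erfc_tendsto_atTop.comp (tendsto_inner_atTop (by linarith))
    rw [int_eq_of_cne hL hc 0 hterm2]; ring

lemma case_two {aL aR : ℝ} (hL : aL < 0) (haR : aR ≤ 0) (hc : aL + aR < 0) :
    ∫ τ in Set.Ioi (0:ℝ), Gcal τ aL aR = aL / (aL + aR) := by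
  rcases eq_or_lt_of_le haR with h0 | hneg
  · subst h0
    have hterm2 : Tendsto (fun τ : ℝ => erfc (-(-(0:ℝ)) * Real.sqrt τ / Real.sqrt 2))
        atTop (𝓝 1) := by
      have : (fun τ : ℝ => erfc (-(-(0:ℝ)) * Real.sqrt τ / Real.sqrt 2)) = fun _ => 1 := by
        funext τ; norm_num [erfc_zero]
      rw [this]; exact tendsto_const_nhds
    rw [int_eq_of_cne hL hc.ne 1 hterm2]
    norm_num
    exact (div_self (ne_of_lt hL)).symm
  · have hterm2 : Tendsto (fun τ : ℝ => erfc (-(-aR) * Real.sqrt τ / Real.sqrt 2))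
        atTop (𝓝 2) := erfc_tendsto_atBot.comp (tendsto_inner_atBot (by linarith))
    rw [int_eq_of_cne hL hc.ne 2 hterm2]
    have : aL + aR ≠ 0 := hc.ne
    field_simp
    ring

lemma tendsto_exp_neg' {ε : ℝ} (hε : 0 < ε) :
    Tendsto (fun τ : ℝ => Real.exp (-(ε*τ))) atTop (𝓝 0) := by
  have h1 : Tendsto (fun τ : ℝ => -(ε*τ)) atTop atBot := by
    have := (tendsto_const_mul_atBot_of_neg (show -ε < 0 by linarith)).2 (tendsto_id (α := ℝ))
    refine this.congr fun τ => by simp only [id_eq]; ring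
  exact Real.tendsto_exp_atBot.comp h1

lemma tendsto_id_mul_exp_neg {ε : ℝ} (hε : 0 < ε) :
    Tendsto (fun τ : ℝ => τ * Real.exp (-(ε*τ))) atTop (𝓝 0) := by
  have hcomp := (tendsto_pow_mul_exp_neg_atTop_nhds_zero 1).comp
    ((tendsto_const_mul_atTop_of_pos hε).2 (tendsto_id (α := ℝ)))
  have h := hcomp.const_mul (1/ε)
  rw [mul_zero] at h
  refine h.congr fun τ => ?_
  simp only [Function.comp_apply, pow_one, id]
  field_simp

lemma tendsto_linear_mul_exp {ε A : ℝ} (hε : 0 < ε) :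
    Tendsto (fun τ : ℝ => (A*τ+1) * Real.exp (-(ε*τ))) atTop (𝓝 0) := by
  have h1 := (tendsto_id_mul_exp_neg hε).const_mul A
  have h2 := tendsto_exp_neg' hε
  have h := h1.add h2
  rw [mul_zero, add_zero] at h
  refine h.congr fun τ => by ring

lemma tendsto_sqrt_mul_exp {ε : ℝ} (hε : 0 < ε) :
    Tendsto (fun τ : ℝ => Real.sqrt τ * Real.exp (-(ε*τ))) atTop (𝓝 0) := by
  apply squeeze_zero' (g := fun τ : ℝ => τ * Real.exp (-(ε*τ)))
  · filter_upwards [eventually_ge_atTop (0:ℝ)] with τ hτ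
    positivity
  · filter_upwards [eventually_ge_atTop (1:ℝ)] with τ hτ
    have hs : Real.sqrt τ ≤ τ := by
      calc Real.sqrt τ ≤ Real.sqrt (τ^2) := Real.sqrt_le_sqrt (by nlinarith)
        _ = τ := Real.sqrt_sq (by linarith)
    exact mul_le_mul_of_nonneg_right hs (Real.exp_pos _).le
  · exact tendsto_id_mul_exp_neg hε

noncomputable def F0 (aL τ : ℝ) : ℝ :=
  -(aL^2*τ + 1) * erfc (-aL * Real.sqrt τ / Real.sqrt 2)
    - (2*aL/(Real.sqrt 2 * Real.sqrt π)) * (Real.sqrt τ * Real.exp (-aL^2*τ/2))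

lemma continuous_F0 (aL : ℝ) : Continuous (F0 aL) := by
  unfold F0
  have h1 : Continuous fun τ : ℝ => -aL * Real.sqrt τ / Real.sqrt 2 :=
    (continuous_const.mul Real.continuous_sqrt).div_const _
  have h2 : Continuous fun τ : ℝ => Real.exp (-aL^2*τ/2) :=
    Real.continuous_exp.comp ((continuous_const.mul continuous_id).div_const _)
  exact ((continuous_const.mul continuous_id |>.add continuous_const).neg.mul
    (continuous_erfc.comp h1)).sub
    (continuous_const.mul (Real.continuous_sqrt.mul h2))

lemma hasDerivAt_F0 (aL : ℝ) {τ : ℝ} (hτ : 0 < τ) :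
    HasDerivAt (F0 aL) (Gcal τ aL (-aL)) τ := by
  have hsτ : (0:ℝ) < Real.sqrt τ := Real.sqrt_pos.2 hτ
  have hsπ : (0:ℝ) < Real.sqrt π := Real.sqrt_pos.2 Real.pi_pos
  have hs2' : (0:ℝ) < Real.sqrt 2 := Real.sqrt_pos.2 (by norm_num)
  have hs2 : Real.sqrt 2 * Real.sqrt 2 = 2 := Real.mul_self_sqrt (by norm_num)
  have ht : Real.sqrt τ * Real.sqrt τ = τ := Real.mul_self_sqrt hτ.le
  have hA : HasDerivAt (fun t : ℝ => -(aL^2*t + 1)) (-aL^2) τ := by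
    simpa [Pi.neg_def] using (((hasDerivAt_id τ).const_mul (aL^2)).add_const 1).neg
  have hB := hasDerivAt_erfc_sqrt aL hτ
  have hAB := hA.mul hB
  have hin : HasDerivAt (fun t : ℝ => -aL^2*t/2) (-aL^2/2) τ := by
    simpa using ((hasDerivAt_id τ).const_mul (-aL^2)).div_const 2
  have hexp := hin.exp
  have hsq : HasDerivAt Real.sqrt (1/(2*Real.sqrt τ)) τ := Real.hasDerivAt_sqrt hτ.ne'
  have hC := hsq.mul hexp
  have hF := hAB.sub (hC.const_mul (2*aL/(Real.sqrt 2 * Real.sqrt π)))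
  convert hF using 1
  · rfl
  · rfl
  · rfl
  unfold Gcal
  rw [show ((-aL:ℝ))^2 = aL^2 from by ring,
    show (2*aL*(aL + -aL)*τ : ℝ) = 0 from by ring, Real.exp_zero,
    show (2*aL + -aL : ℝ) = aL from by ring,
    Real.sqrt_mul Real.pi_pos.le]
  set e := Real.exp (-aL^2*τ/2) with he
  set R := erfc (-aL * Real.sqrt τ / Real.sqrt 2) with hR
  set s2 := Real.sqrt 2 with hs2d
  set sτ := Real.sqrt τ with hstd
  set sπ := Real.sqrt π with hspd
  rw [← hs2, ← ht]
  field_simp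
  linear_combination (-(aL*e)) * hs2

lemma F0_zero (aL : ℝ) : F0 aL 0 = -1 := by
  unfold F0
  simp [erfc_zero]

lemma tendsto_F0 {aL : ℝ} (hL : aL < 0) : Tendsto (F0 aL) atTop (𝓝 0) := by
  have hε : (0:ℝ) < aL^2/2 := by nlinarith
  have hsπ : (0:ℝ) < Real.sqrt π := Real.sqrt_pos.2 Real.pi_pos
  have hs2' : (0:ℝ) < Real.sqrt 2 := Real.sqrt_pos.2 (by norm_num)
  have haL : (0:ℝ) < -aL := neg_pos.2 hL
  have h1 : Tendsto (fun τ : ℝ => (aL^2*τ+1) * erfc (-aL * Real.sqrt τ / Real.sqrt 2))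
      atTop (𝓝 0) := by
    apply squeeze_zero'
      (g := fun τ : ℝ => (Real.sqrt 2/((-aL) * Real.sqrt π)) * ((aL^2*τ+1) * Real.exp (-(aL^2/2*τ))))
    · filter_upwards [eventually_ge_atTop (0:ℝ)] with τ hτ
      have := erfc_nonneg (-aL * Real.sqrt τ / Real.sqrt 2)
      have h2 : (0:ℝ) ≤ aL^2*τ+1 := by positivity
      exact mul_nonneg h2 this
    · filter_upwards [eventually_ge_atTop (1:ℝ)] with τ hτ
      have hτ0 : (0:ℝ) < τ := by linarith
      have hsτ : (0:ℝ) < Real.sqrt τ := Real.sqrt_pos.2 hτ0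
      have hsτ1 : (1:ℝ) ≤ Real.sqrt τ := by
        rw [show (1:ℝ) = Real.sqrt 1 from (Real.sqrt_one).symm]
        exact Real.sqrt_le_sqrt hτ
      have hx : 0 < -aL * Real.sqrt τ / Real.sqrt 2 := by positivity
      have hR := erfc_le_bound hx
      rw [arg_sq aL hτ0.le] at hR
      have hb1 : Real.exp (-(aL^2*τ/2)) / ((-aL * Real.sqrt τ / Real.sqrt 2) * Real.sqrt π)
          ≤ Real.exp (-(aL^2*τ/2)) * (Real.sqrt 2 / ((-aL) * Real.sqrt π)) := by
        rw [div_eq_mul_inv]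
        apply mul_le_mul_of_nonneg_left _ (Real.exp_pos _).le
        rw [show ((-aL * Real.sqrt τ / Real.sqrt 2) * Real.sqrt π)
            = ((-aL) * Real.sqrt π / Real.sqrt 2) * Real.sqrt τ from by ring]
        rw [mul_inv, show Real.sqrt 2 / ((-aL) * Real.sqrt π) = ((-aL) * Real.sqrt π / Real.sqrt 2)⁻¹ from by
          rw [inv_div]]
        have hd : (0:ℝ) < (-aL) * Real.sqrt π / Real.sqrt 2 := by positivity
        nth_rewrite 2 [show (((-aL) * Real.sqrt π / Real.sqrt 2)⁻¹ : ℝ)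
          = ((-aL) * Real.sqrt π / Real.sqrt 2)⁻¹ * 1 from (mul_one _).symm]
        apply mul_le_mul_of_nonneg_left _ (by positivity)
        rw [inv_le_one_iff₀]
        right; exact hsτ1
      have h2 : (0:ℝ) ≤ aL^2*τ+1 := by positivity
      calc (aL^2*τ+1) * erfc (-aL * Real.sqrt τ / Real.sqrt 2)
          ≤ (aL^2*τ+1) * (Real.exp (-(aL^2*τ/2)) / ((-aL * Real.sqrt τ / Real.sqrt 2) * Real.sqrt π)) :=
            mul_le_mul_of_nonneg_left hR h2
        _ ≤ (aL^2*τ+1) * (Real.exp (-(aL^2*τ/2)) * (Real.sqrt 2 / ((-aL) * Real.sqrt π))) :=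
            mul_le_mul_of_nonneg_left hb1 h2
        _ = (Real.sqrt 2/((-aL) * Real.sqrt π)) * ((aL^2*τ+1) * Real.exp (-(aL^2/2*τ))) := by
            rw [show -(aL^2*τ/2) = -(aL^2/2*τ) from by ring]; ring
    · have := (tendsto_linear_mul_exp (A := aL^2) hε).const_mul
        (Real.sqrt 2/((-aL) * Real.sqrt π))
      simpa using this
  have h2 : Tendsto (fun τ : ℝ => Real.sqrt τ * Real.exp (-aL^2*τ/2)) atTop (𝓝 0) := by
    have := tendsto_sqrt_mul_exp hε
    refine this.congr fun τ => ?_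
    rw [show -(aL^2/2*τ) = -aL^2*τ/2 from by ring]
  have hsum := (h1.neg).sub ((h2.const_mul (2*aL/(Real.sqrt 2 * Real.sqrt π))))
  rw [neg_zero, mul_zero, sub_zero] at hsum
  refine hsum.congr fun τ => ?_
  unfold F0
  ring

lemma case_one_ceq {aL aR : ℝ} (hL : aL < 0) (hc : aL + aR = 0) :
    ∫ τ in Set.Ioi (0:ℝ), Gcal τ aL aR = 1 := by
  have haR : aR = -aL := by linarith
  subst haR
  rw [integral_Ioi_of_hasDerivAt_of_nonneg (continuous_F0 aL).continuousWithinAt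
    (fun τ hτ => hasDerivAt_F0 aL hτ) (fun τ hτ => Gcal_nonneg hL hτ) (tendsto_F0 hL),
    F0_zero]
  ring

/-- total mass of `𝒢` in the two sign cases. -/
theorem stmt13 (aL aR : ℝ) (hL : aL < 0) :
    (0 ≤ aR → ∫ τ in Set.Ioi (0:ℝ), Gcal τ aL aR = 1) ∧
    (aR ≤ 0 → aL + aR < 0 →
      ∫ τ in Set.Ioi (0:ℝ), Gcal τ aL aR = aL / (aL + aR)) := by
  constructor
  · intro haR
    rcases eq_or_ne (aL + aR) 0 with hc | hc
    · exact case_one_ceq hL hc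
    · exact case_one_cne hL haR hc
  · intro haR hc
    exact case_two hL haR hc
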